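/- arXiv:math/0310037 — 5 statements merged into one kernel-verified Lean document; each statement's English description precedes it below -/
import Mathlib

section
/- For every a ∈ CB^∞(ℝ^{2n}, A) and every φ ∈ S_A, the function x ↦ a(x,D)φ(x) = ∫ e^{i x·ξ} a(x,ξ) φ̂(ξ) d̄ξ belongs to L²(ℝⁿ, A), i.e. it is strongly measurable and ∫_{ℝⁿ} ‖a(x,D)φ(x)‖² dx < ∞. -/
open MeasureTheory Complex Filter Metric
open scoped ContDiff
open scoped FourierTransform RealInnerProductSpace
set_option maxHeartbeats 1000000

noncomputable section

/-- `En n` is the Euclidean space `ℝⁿ`. -/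
abbrev En (n : ℕ) : Type := EuclideanSpace ℝ (Fin n)

/-- `CBInfty f` says that `f` is smooth and all of its derivatives
(including `f` itself) are bounded. -/
def CBInfty {E F : Type*} [NormedAddCommGroup E] [NormedSpace ℝ E]
    [NormedAddCommGroup F] [NormedSpace ℝ F] (f : E → F) : Prop :=
  ContDiff ℝ ∞ f ∧ ∀ k : ℕ, ∃ C : ℝ, ∀ x, ‖iteratedFDeriv ℝ k f x‖ ≤ C

variable {n : ℕ} (A : Type*) [NormedRing A] [StarRing A] [CStarRing A]
  [CompleteSpace A] [NormedAlgebra ℂ A] [StarModule ℂ A]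

/-- The Fourier transform `φ̂(ξ) = (2π)^{-n/2} ∫ e^{-i y·ξ} φ(y) dy`. -/
def fourierA (φ : En n → A) (ξ : En n) : A :=
  (2 * Real.pi) ^ (-(n : ℝ) / 2) •
    ∫ y : En n, Complex.exp (-(Complex.I * ((inner ℝ y ξ : ℝ) : ℂ))) • φ y

/-- The pseudodifferential operator with symbol `a`:
`a(x,D)φ(x) = (2π)^{-n/2} ∫ e^{i x·ξ} a(x,ξ) φ̂(ξ) dξ`. -/
def psdo (a : En n × En n → A) (φ : En n → A) (x : En n) : A :=
  (2 * Real.pi) ^ (-(n : ℝ) / 2) •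
    ∫ ξ : En n, Complex.exp (Complex.I * ((inner ℝ x ξ : ℝ) : ℂ)) • (a (x, ξ) * fourierA A φ ξ)

/-- `‖f‖₂ = ‖∫ f(x)* f(x) dx‖^{1/2}`, the norm associated to the `A`-valued
inner product `⟨f,g⟩ = ∫ f(x)* g(x) dx`. -/
def normTwo {X : Type*} [MeasureSpace X] (f : X → A) : ℝ :=
  Real.sqrt ‖∫ x : X, star (f x) * f x‖

/-- Directional (partial) derivative of `f` in the direction `v`. -/
def pderivV {E F : Type*} [NormedAddCommGroup E] [NormedSpace ℝ E]
    [NormedAddCommGroup F] [NormedSpace ℝ F] (v : E) (f : E → F) : E → F :=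
  fun x => fderiv ℝ f x v

/-- Iterated directional derivatives along a list of directions. -/
def multiPderiv {E F : Type*} [NormedAddCommGroup E] [NormedSpace ℝ E]
    [NormedAddCommGroup F] [NormedSpace ℝ F] (vs : List E) (f : E → F) : E → F :=
  vs.foldr pderivV f

/-- The mixed partial derivative `∂^β_x ∂^γ_ξ a`, where `β, γ ∈ {0,1}^n` are
encoded as boolean vectors. -/
def mixedPderiv (β γ : Fin n → Bool) (a : En n × En n → A) : En n × En n → A :=
  multiPderiv
    ((((List.finRange n).filter fun j => β j).map
        fun j => ((EuclideanSpace.single j (1 : ℝ) : En n), (0 : En n))) ++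
      (((List.finRange n).filter fun j => γ j).map
        fun j => ((0 : En n), (EuclideanSpace.single j (1 : ℝ) : En n)))) a

/-- `π(a) = sup { ‖∂^β_x ∂^γ_ξ a(x,ξ)‖ : (x,ξ) ∈ ℝ^{2n}, β, γ ≤ (1,…,1) }`. -/
def symbNorm (a : En n × En n → A) : ℝ :=
  ⨆ q : ((Fin n → Bool) × (Fin n → Bool)) × (En n × En n),
    ‖mixedPderiv A q.1.1 q.1.2 a q.2‖


section Aux

variable {E F G : Type*} [NormedAddCommGroup E] [NormedSpace ℝ E]
  [NormedAddCommGroup F] [NormedSpace ℝ F] [NormedAddCommGroup G] [NormedSpace ℝ G]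

theorem my_iteratedFDeriv_comp_const_add (f : E → F) (hf : ContDiff ℝ (⊤ : ℕ∞) f) (c : E) (k : ℕ)
    (x : E) :
    iteratedFDeriv ℝ k (fun y => f (c + y)) x = iteratedFDeriv ℝ k f (c + x) := by
  have hp : HasFTaylorSeriesUpTo (⊤ : ℕ∞) f (ftaylorSeries ℝ f) := contDiff_iff_ftaylorSeries.1 hf
  have hq : HasFTaylorSeriesUpTo (⊤ : ℕ∞) (fun y => f (c + y))
      (fun y => ftaylorSeries ℝ f (c + y)) := by
    constructor
    · intro y; exact hp.zero_eq (c + y)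
    · intro m hm y
      have h1 : HasFDerivAt (fun z => ftaylorSeries ℝ f z m)
          ((ftaylorSeries ℝ f (c + y) m.succ).curryLeft) (c + y) := hp.fderiv m hm (c + y)
      have h2 : HasFDerivAt (fun y : E => c + y) (ContinuousLinearMap.id ℝ E) y := by
        simpa using (hasFDerivAt_id y).const_add c
      have h3 := h1.comp y h2
      simp only [ContinuousLinearMap.comp_id] at h3
      exact h3
    · intro m hm
      exact (hp.cont m hm).comp (continuous_const.add continuous_id)
  calc iteratedFDeriv ℝ k (fun y => f (c + y)) x
      = ftaylorSeries ℝ f (c + x) k := (hq.eq_iteratedFDeriv (by exact_mod_cast le_top) x).symm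
    _ = iteratedFDeriv ℝ k f (c + x) := rfl

theorem my_norm_iteratedFDeriv_fixfst (a : E × F → G) (ha : ContDiff ℝ (⊤ : ℕ∞) a) (x : E) (k : ℕ)
    (ξ : F) {C : ℝ} (hC : ∀ p, ‖iteratedFDeriv ℝ k a p‖ ≤ C) :
    ‖iteratedFDeriv ℝ k (fun ξ => a (x, ξ)) ξ‖ ≤ C := by
  set L := ContinuousLinearMap.inr ℝ E F with hL
  have hLnorm : ‖L‖ ≤ 1 := by
    apply ContinuousLinearMap.opNorm_le_bound _ zero_le_one
    intro y; simp [hL, Prod.norm_def]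
  set b : E × F → G := fun p => a ((x, 0) + p) with hb
  have hbc : ContDiff ℝ (⊤ : ℕ∞) b := ha.comp ((contDiff_const).add contDiff_id)
  have h1 : (fun ξ : F => a (x, ξ)) = b ∘ L := by
    funext ξ; simp [hb, hL, Prod.mk_add_mk]
  rw [h1, L.iteratedFDeriv_comp_right hbc ξ (by exact_mod_cast le_top)]
  have h2 : iteratedFDeriv ℝ k b (L ξ) = iteratedFDeriv ℝ k a (x, ξ) := by
    have := my_iteratedFDeriv_comp_const_add a ha ((x, 0) : E × F) k ((0, ξ) : E × F)
    simpa [hb, hL, Prod.mk_add_mk] using this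
  calc ‖(iteratedFDeriv ℝ k b (L ξ)).compContinuousLinearMap fun _ => L‖
      ≤ ‖iteratedFDeriv ℝ k b (L ξ)‖ * ∏ _i : Fin k, ‖L‖ :=
        ContinuousMultilinearMap.norm_compContinuousLinearMap_le _ _
    _ ≤ C * 1 := by
        apply mul_le_mul (h2 ▸ hC (x, ξ)) _ (by positivity)
          ((norm_nonneg _).trans (h2 ▸ hC (x, ξ)))
        calc (∏ _i : Fin k, ‖L‖) ≤ ∏ _i : Fin k, (1:ℝ) :=
              Finset.prod_le_prod (fun _ _ => norm_nonneg _) (fun _ _ => hLnorm)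
          _ = 1 := by simp
    _ = C := mul_one C

end Aux

/-- For every `a ∈ CB^∞(ℝ^{2n}, A)` and every `φ ∈ S_A`, the function
`x ↦ a(x,D)φ(x)` belongs to `L²(ℝⁿ, A)`: it is strongly measurable and
`∫ ‖a(x,D)φ(x)‖² dx < ∞`. -/
theorem psdo_memL2 (a : En n × En n → A) (ha : CBInfty a) (φ : SchwartzMap (En n) A) :
    StronglyMeasurable (psdo A a ⇑φ) ∧
      Integrable (fun x : En n => ‖psdo A a ⇑φ x‖ ^ 2) := by
  classical
  have hπ : (0:ℝ) < 2 * Real.pi := by positivity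
  have hπ1 : (1:ℝ) ≤ 2 * Real.pi := by nlinarith [Real.pi_gt_three]
  set c₀ : ℝ := (2 * Real.pi) ^ (-(n : ℝ) / 2) with hc₀def
  have hc₀ : 0 < c₀ := Real.rpow_pos_of_pos hπ _
  -- the scaling equivalence ξ ↦ (2π)⁻¹ • ξ
  set σ : En n ≃L[ℝ] En n :=
    (LinearEquiv.smulOfNeZero ℝ (En n) (2 * Real.pi)⁻¹
      (inv_ne_zero hπ.ne')).toContinuousLinearEquiv with hσdef
  have hσ : ∀ ξ : En n, σ ξ = (2 * Real.pi)⁻¹ • ξ := fun _ => rfl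
  -- ψ is the Schwartz function equal to `fourierA A φ`
  set ψ : SchwartzMap (En n) A :=
    c₀ • (SchwartzMap.compCLMOfContinuousLinearEquiv ℝ σ
      (SchwartzMap.fourierTransformCLM ℝ φ)) with hψdef
  have hψ : ∀ ξ, ψ ξ = fourierA A φ ξ := by
    intro ξ
    have h1 : ψ ξ = c₀ • (𝓕 ⇑φ) ((2 * Real.pi)⁻¹ • ξ) := by
      simp [hψdef, hσ, SchwartzMap.fourier_coe]
    rw [h1, fourierA, Real.fourier_eq']
    congr 1
    apply integral_congr_ae
    filter_upwards with y
    congr 1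
    have hip : (inner ℝ y ((2 * Real.pi)⁻¹ • ξ) : ℝ) = (2 * Real.pi)⁻¹ * (inner ℝ y ξ : ℝ) :=
      real_inner_smul_right y ξ _
    rw [hip]
    have : -2 * Real.pi * ((2 * Real.pi)⁻¹ * (inner ℝ y ξ : ℝ)) = -(inner ℝ y ξ : ℝ) := by
      field_simp
    rw [this]
    push_cast
    ring_nf
  -- bounds on the derivatives of the symbol
  have hCfun : ∀ k : ℕ, ∃ C : ℝ, ∀ p, ‖iteratedFDeriv ℝ k a p‖ ≤ C := ha.2
  set Cfun : ℕ → ℝ := fun k => (hCfun k).choose with hCfundef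
  have hCfun' : ∀ k p, ‖iteratedFDeriv ℝ k a p‖ ≤ Cfun k := fun k => (hCfun k).choose_spec
  have hCfun0 : ∀ k, 0 ≤ Cfun k := fun k => (norm_nonneg _).trans (hCfun' k (0, 0))
  have hasm : ContDiff ℝ (⊤ : ℕ∞) a := ha.1
  have hax : ∀ (x : En n) (k : ℕ) (ξ : En n),
      ‖iteratedFDeriv ℝ k (fun ξ => a (x, ξ)) ξ‖ ≤ Cfun k := fun x k ξ =>
    my_norm_iteratedFDeriv_fixfst a hasm x k ξ (hCfun' k)
  have hasmooth : ∀ x : En n, ContDiff ℝ (⊤ : ℕ∞) fun ξ => a (x, ξ) := fun x =>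
    hasm.comp (contDiff_const.prodMk contDiff_id)
  have habdd : ∀ p, ‖a p‖ ≤ Cfun 0 := by
    intro p
    have := hCfun' 0 p
    rwa [norm_iteratedFDeriv_zero] at this
  have htg : ∀ x : En n, Function.HasTemperateGrowth fun ξ => a (x, ξ) := by
    intro x
    refine ⟨by exact_mod_cast hasmooth x, fun k => ⟨0, Cfun k, fun ξ => ?_⟩⟩
    simpa using hax x k ξ
  -- the Schwartz function ξ ↦ a (x, ξ) * ψ ξ
  set B : A →L[ℝ] A →L[ℝ] A := (ContinuousLinearMap.mul ℝ A).flip with hBdef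
  set g : En n → SchwartzMap (En n) A := fun x => SchwartzMap.bilinLeftCLM B (htg x) ψ with hgdef
  have hg : ∀ x ξ, g x ξ = a (x, ξ) * ψ ξ := fun x ξ => rfl
  have hgfun : ∀ x, ⇑(g x) = fun ξ => a (x, ξ) * ψ ξ := fun x => funext (hg x)
  -- uniform bounds for the Schwartz seminorms of `g x`
  have hsem : ∀ k m : ℕ, ∃ D : ℝ, 0 ≤ D ∧ ∀ x, SchwartzMap.seminorm ℝ k m (g x) ≤ D := by
    intro k m
    refine ⟨∑ i ∈ Finset.range (m + 1),
      (m.choose i : ℝ) * Cfun i * SchwartzMap.seminorm ℝ k (m - i) ψ, ?_, ?_⟩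
    · apply Finset.sum_nonneg
      intro i _
      have := hCfun0 i
      positivity
    · intro x
      apply SchwartzMap.seminorm_le_bound ℝ k m (g x)
      · apply Finset.sum_nonneg
        intro i _
        have := hCfun0 i
        positivity
      intro ξ
      rw [hgfun x]
      calc ‖ξ‖ ^ k * ‖iteratedFDeriv ℝ m (fun ξ => a (x, ξ) * ψ ξ) ξ‖
          ≤ ‖ξ‖ ^ k * ∑ i ∈ Finset.range (m + 1),
              (m.choose i : ℝ) * ‖iteratedFDeriv ℝ i (fun ξ => a (x, ξ)) ξ‖ *
                ‖iteratedFDeriv ℝ (m - i) (⇑ψ) ξ‖ := by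
            apply mul_le_mul_of_nonneg_left _ (by positivity)
            exact norm_iteratedFDeriv_mul_le (hasmooth x) (ψ.smooth (⊤ : ℕ∞)) ξ
              (by exact_mod_cast le_top)
        _ = ∑ i ∈ Finset.range (m + 1), (m.choose i : ℝ) *
              ‖iteratedFDeriv ℝ i (fun ξ => a (x, ξ)) ξ‖ *
                (‖ξ‖ ^ k * ‖iteratedFDeriv ℝ (m - i) (⇑ψ) ξ‖) := by
            rw [Finset.mul_sum]; apply Finset.sum_congr rfl; intros; ring
        _ ≤ ∑ i ∈ Finset.range (m + 1),
              (m.choose i : ℝ) * Cfun i * SchwartzMap.seminorm ℝ k (m - i) ψ := by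
            apply Finset.sum_le_sum
            intro i _
            apply mul_le_mul
            · exact mul_le_mul_of_nonneg_left (hax x i ξ) (by positivity)
            · exact SchwartzMap.le_seminorm ℝ k (m - i) ψ ξ
            · positivity
            · have := hCfun0 i; positivity
  set Dfun : ℕ × ℕ → ℝ := fun i => (hsem i.1 i.2).choose with hDfundef
  have hDfun : ∀ i : ℕ × ℕ, 0 ≤ Dfun i ∧ ∀ x, SchwartzMap.seminorm ℝ i.1 i.2 (g x) ≤ Dfun i :=
    fun i => (hsem i.1 i.2).choose_spec
  -- uniform bounds for the seminorms of the Fourier transforms of `g x`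
  have hFsem : ∀ k m : ℕ, ∃ K : ℝ, 0 ≤ K ∧
      ∀ x, SchwartzMap.seminorm ℝ k m (SchwartzMap.fourierTransformCLM ℝ (g x)) ≤ K := by
    intro k m
    set T : SchwartzMap (En n) A →L[ℝ] SchwartzMap (En n) A :=
      SchwartzMap.fourierTransformCLM ℝ with hTdef
    set q : Seminorm ℝ (SchwartzMap (En n) A) :=
      (SchwartzMap.seminorm ℝ k m).comp (T : SchwartzMap (En n) A →ₗ[ℝ] SchwartzMap (En n) A)
      with hqdef
    have hqc : Continuous q := by
      have h1 : Continuous (SchwartzMap.seminorm ℝ (E := En n) (F := A) k m) := by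
        simpa using
          (schwartz_withSeminorms ℝ (En n) A).continuous_seminorm ((k, m) : ℕ × ℕ)
      exact h1.comp T.continuous
    obtain ⟨s, C, hC0, hle⟩ :=
      Seminorm.bound_of_continuous (schwartz_withSeminorms ℝ (En n) A) q hqc
    refine ⟨C * ∑ i ∈ s, Dfun i, ?_, ?_⟩
    · apply mul_nonneg C.coe_nonneg
      exact Finset.sum_nonneg fun i _ => (hDfun i).1
    · intro x
      have h2 : q (g x) ≤ C * (s.sup (schwartzSeminormFamily ℝ (En n) A)) (g x) := by
        have := hle (g x)
        simpa [Seminorm.smul_apply, NNReal.smul_def] using this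
      have h3 : (s.sup (schwartzSeminormFamily ℝ (En n) A)) (g x) ≤ ∑ i ∈ s, Dfun i := by
        apply Seminorm.finset_sup_apply_le (Finset.sum_nonneg fun i _ => (hDfun i).1)
        intro i hi
        calc schwartzSeminormFamily ℝ (En n) A i (g x) ≤ Dfun i := by
              simpa [schwartzSeminormFamily] using (hDfun i).2 x
          _ ≤ ∑ j ∈ s, Dfun j := Finset.single_le_sum (fun j _ => (hDfun j).1) hi
      calc SchwartzMap.seminorm ℝ k m (T (g x)) = q (g x) := rfl
        _ ≤ C * (s.sup (schwartzSeminormFamily ℝ (En n) A)) (g x) := h2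
        _ ≤ C * ∑ i ∈ s, Dfun i := by
            exact mul_le_mul_of_nonneg_left h3 C.coe_nonneg
  set Kfun : ℕ × ℕ → ℝ := fun i => (hFsem i.1 i.2).choose with hKfundef
  have hKfun : ∀ i : ℕ × ℕ, 0 ≤ Kfun i ∧
      ∀ x, SchwartzMap.seminorm ℝ i.1 i.2 (SchwartzMap.fourierTransformCLM ℝ (g x)) ≤ Kfun i :=
    fun i => (hFsem i.1 i.2).choose_spec
  -- decay of the Fourier transforms of `g x`, uniformly in `x`
  obtain ⟨K, hK0, hdecay⟩ : ∃ K : ℝ, 0 ≤ K ∧ ∀ (x y : En n),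
      (1 + ‖y‖) ^ (n + 1) * ‖𝓕 ⇑(g x) y‖ ≤ K := by
    set s : Finset (ℕ × ℕ) := Finset.Iic ((n + 1, 0) : ℕ × ℕ) with hsdef
    refine ⟨2 ^ (n + 1) * ∑ i ∈ s, Kfun i,
      mul_nonneg (by positivity) (Finset.sum_nonneg fun i _ => (hKfun i).1), ?_⟩
    intro x y
    have h1 := SchwartzMap.one_add_le_sup_seminorm_apply (𝕜 := ℝ) (m := ((n + 1, 0) : ℕ × ℕ))
      (k := n + 1) (n := 0) le_rfl le_rfl (SchwartzMap.fourierTransformCLM ℝ (g x)) y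
    rw [norm_iteratedFDeriv_zero] at h1
    have h2 : (SchwartzMap.fourierTransformCLM ℝ (g x)) y = 𝓕 ⇑(g x) y := by
      rw [SchwartzMap.fourierTransformCLM_apply, SchwartzMap.fourier_coe]
    rw [h2] at h1
    refine h1.trans ?_
    apply mul_le_mul_of_nonneg_left _ (by positivity)
    apply Seminorm.finset_sup_apply_le (Finset.sum_nonneg fun i _ => (hKfun i).1)
    intro i hi
    calc schwartzSeminormFamily ℝ (En n) A i (SchwartzMap.fourierTransformCLM ℝ (g x))
        ≤ Kfun i := by simpa [schwartzSeminormFamily] using (hKfun i).2 x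
      _ ≤ ∑ j ∈ s, Kfun j := Finset.single_le_sum (fun j _ => (hKfun j).1) hi
  -- the pseudodifferential operator as a Fourier transform
  have hpsdo : ∀ x : En n, psdo A a ⇑φ x = c₀ • 𝓕 ⇑(g x) (-(2 * Real.pi)⁻¹ • x) := by
    intro x
    rw [psdo, Real.fourier_eq']
    congr 1
    apply integral_congr_ae
    filter_upwards with ξ
    rw [hg x ξ, hψ ξ]
    congr 1
    have hip : (inner ℝ ξ (-(2 * Real.pi)⁻¹ • x) : ℝ) = -(2 * Real.pi)⁻¹ * (inner ℝ ξ x : ℝ) :=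
      real_inner_smul_right ξ x _
    rw [hip]
    have h3 : -2 * Real.pi * (-(2 * Real.pi)⁻¹ * (inner ℝ ξ x : ℝ)) = (inner ℝ x ξ : ℝ) := by
      rw [real_inner_comm]
      field_simp
    rw [h3]
    ring_nf
  -- continuity of `psdo A a φ`
  have hfA : fourierA A φ = ⇑ψ := (funext hψ).symm
  have hrepr : psdo A a ⇑φ = fun x => c₀ •
      ∫ ξ : En n, Complex.exp (Complex.I * ((inner ℝ x ξ : ℝ) : ℂ)) • (a (x, ξ) * ψ ξ) := by
    funext x
    rw [psdo, hfA]
  have hcont : Continuous (psdo A a ⇑φ) := by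
    rw [hrepr]
    apply Continuous.const_smul
    rw [continuous_iff_continuousAt]
    intro x₀
    apply continuousAt_of_dominated (bound := fun ξ => Cfun 0 * ‖ψ ξ‖)
    · filter_upwards with x
      apply Continuous.aestronglyMeasurable
      apply Continuous.smul
      · exact Complex.continuous_exp.comp (continuous_const.mul
          (Complex.continuous_ofReal.comp ((continuous_const (y := x)).inner continuous_id)))
      · exact ((hasm.continuous).comp (continuous_const.prodMk continuous_id)).mul ψ.continuous
    · filter_upwards with x
      filter_upwards with ξ
      rw [norm_smul]
      have h1 : ‖Complex.exp (Complex.I * ((inner ℝ x ξ : ℝ) : ℂ))‖ = 1 := by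
        rw [mul_comm]
        exact Complex.norm_exp_ofReal_mul_I _
      rw [h1, one_mul]
      exact (norm_mul_le _ _).trans (mul_le_mul_of_nonneg_right (habdd _) (norm_nonneg _))
    · exact (ψ.integrable.norm).const_mul _
    · filter_upwards with ξ
      apply ContinuousAt.smul
      · exact (Complex.continuous_exp.comp (continuous_const.mul
          (Complex.continuous_ofReal.comp (continuous_id.inner continuous_const)))).continuousAt
      · exact (((hasm.continuous).comp (continuous_id.prodMk continuous_const)).mul
          continuous_const).continuousAt
  -- pointwise bound
  set M : ℝ := c₀ * ((2 * Real.pi) ^ (n + 1) * K) with hMdef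
  have hM0 : 0 ≤ M := mul_nonneg hc₀.le (mul_nonneg (by positivity) hK0)
  have hbound : ∀ x : En n, ‖psdo A a ⇑φ x‖ * (1 + ‖x‖) ^ (n + 1) ≤ M := by
    intro x
    set w : En n := -(2 * Real.pi)⁻¹ • x with hwdef
    have hw : ‖w‖ = (2 * Real.pi)⁻¹ * ‖x‖ := by
      rw [hwdef, norm_smul, Real.norm_eq_abs, abs_neg, abs_of_pos (inv_pos.2 hπ)]
    have h1 : ‖psdo A a ⇑φ x‖ = c₀ * ‖𝓕 ⇑(g x) w‖ := by
      rw [hpsdo x, norm_smul, Real.norm_of_nonneg hc₀.le]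
    have h2 : (1 + ‖x‖) ≤ (2 * Real.pi) * (1 + ‖w‖) := by
      rw [hw]
      have : (2 * Real.pi) * ((2 * Real.pi)⁻¹ * ‖x‖) = ‖x‖ := by field_simp
      nlinarith [norm_nonneg x]
    have h3 : (1 + ‖x‖) ^ (n + 1) ≤ (2 * Real.pi) ^ (n + 1) * (1 + ‖w‖) ^ (n + 1) := by
      rw [← mul_pow]
      exact pow_le_pow_left₀ (by positivity) h2 _
    calc ‖psdo A a ⇑φ x‖ * (1 + ‖x‖) ^ (n + 1)
        ≤ (c₀ * ‖𝓕 ⇑(g x) w‖) * ((2 * Real.pi) ^ (n + 1) * (1 + ‖w‖) ^ (n + 1)) := by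
          rw [h1]
          exact mul_le_mul_of_nonneg_left h3 (by positivity)
      _ = c₀ * ((2 * Real.pi) ^ (n + 1) * ((1 + ‖w‖) ^ (n + 1) * ‖𝓕 ⇑(g x) w‖)) := by ring
      _ ≤ M := by
          rw [hMdef]
          apply mul_le_mul_of_nonneg_left _ hc₀.le
          exact mul_le_mul_of_nonneg_left (hdecay x w) (by positivity)
  refine ⟨hcont.stronglyMeasurable, ?_⟩
  -- integrability of the square
  have hint : Integrable (fun x : En n => M ^ 2 * (1 + ‖x‖) ^ (-(2 * (n : ℝ) + 2))) := by
    apply Integrable.const_mul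
    apply integrable_one_add_norm (E := En n)
    rw [finrank_euclideanSpace_fin]
    push_cast
    linarith
  apply hint.mono' ((hcont.norm.pow 2).aestronglyMeasurable)
  filter_upwards with x
  have hP : (0:ℝ) < (1 + ‖x‖) ^ (n + 1) := by positivity
  have h4 : ‖psdo A a ⇑φ x‖ ≤ M / (1 + ‖x‖) ^ (n + 1) :=
    (le_div_iff₀ hP).2 (hbound x)
  have h5 : (1 + ‖x‖ : ℝ) ^ (-(2 * (n : ℝ) + 2)) = (((1 + ‖x‖) ^ (n + 1)) ^ 2)⁻¹ := by
    rw [← pow_mul]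
    have : -(2 * (n : ℝ) + 2) = -(((n + 1) * 2 : ℕ) : ℝ) := by push_cast; ring
    rw [this, Real.rpow_neg (by positivity), Real.rpow_natCast]
  show ‖‖psdo A a ⇑φ x‖ ^ 2‖ ≤ _
  rw [Real.norm_of_nonneg (sq_nonneg ‖psdo A a ⇑φ x‖)]
  calc ‖psdo A a ⇑φ x‖ ^ 2 ≤ (M / (1 + ‖x‖) ^ (n + 1)) ^ 2 := by
        apply pow_le_pow_left₀ (norm_nonneg _) h4
    _ = M ^ 2 * (1 + ‖x‖) ^ (-(2 * (n : ℝ) + 2)) := by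
        rw [h5, div_pow]
        ring

end
end

section
/- The Fourier transform is 'unitary' with respect to the A-valued inner product: for all f, g ∈ S_A, ∫_{ℝⁿ} f̂(ξ)* ĝ(ξ) dξ = ∫_{ℝⁿ} f(x)* g(x) dx, i.e. ⟨f̂, ĝ⟩ = ⟨f, g⟩. (A-valued Parseval identity.) -/
open MeasureTheory Complex Filter Metric
open scoped ContDiff

noncomputable section

variable {n : ℕ} (A : Type*) [NormedRing A] [StarRing A] [CStarRing A]
  [CompleteSpace A] [NormedAlgebra ℂ A] [StarModule ℂ A]

section AuxParseval
set_option linter.unusedSectionVars false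
open scoped FourierTransform RealInnerProductSpace

lemma fourierA_eq_aux (φ : En n → A) (ξ : En n) :
    fourierA A φ ξ = (2 * Real.pi) ^ (-(n : ℝ) / 2) •
      𝓕 φ ((2 * Real.pi)⁻¹ • ξ) := by
  rw [fourierA, Real.fourier_eq']
  congr 1
  congr 1
  ext y
  congr 2
  rw [real_inner_smul_right]
  have h : -2 * Real.pi * ((2 * Real.pi)⁻¹ * ⟪y, ξ⟫) = -⟪y, ξ⟫ := by
    field_simp
  rw [h]
  push_cast
  ring

lemma star_integral' {f : En n → A} (hf : Integrable f) :
    star (∫ x, f x) = ∫ x, star (f x) :=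
  (ContinuousLinearMap.integral_comp_comm ((starL' ℝ : A ≃L[ℝ] A) : A →L[ℝ] A) hf).symm
lemma star_fourier (f : SchwartzMap (En n) A) (ξ : En n) :
    star (𝓕 (⇑f) ξ) =
      𝓕 (fun x => star (f (-x))) ξ := by
  rw [Real.fourier_eq', Real.fourier_eq', star_integral']
  · rw [← integral_neg_eq_self
      (fun v => star (Complex.exp ((↑(-2 * Real.pi * ⟪v, ξ⟫) * Complex.I)) • f v))]
    congr 1
    ext v
    rw [star_smul]
    congr 1
    rw [Complex.star_def, ← Complex.exp_conj]
    congr 1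
    simp only [map_mul, Complex.conj_ofReal, Complex.conj_I, inner_neg_left]
    push_cast
    ring
  · apply (f.integrable.norm.const_mul 1).mono'
    · exact (Continuous.aestronglyMeasurable (Complex.continuous_exp.comp ((Complex.continuous_ofReal.comp (continuous_const.mul (continuous_inner.comp (Continuous.prodMk_left ξ)))).mul continuous_const))).smul f.continuous.aestronglyMeasurable
    · filter_upwards with v
      rw [norm_smul, Complex.norm_exp_ofReal_mul_I]

lemma parseval2pi (f g : SchwartzMap (En n) A) :
    ∫ ξ, star (𝓕 (⇑f) ξ) * 𝓕 (⇑g) ξ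
      = ∫ x, star (f x) * g x := by
  set h : En n → A := fun x => star (f (-x)) with hh_def
  have hh : Integrable h :=
    ((starL' ℝ : A ≃L[ℝ] A) : A →L[ℝ] A).integrable_comp f.integrable.comp_neg
  have hgF : Integrable (𝓕 (⇑g)) := by
    have := (SchwartzMap.fourierTransformCLM ℂ g).integrable (μ := volume)
    rwa [SchwartzMap.fourierTransformCLM_apply, SchwartzMap.fourier_coe] at this
  have hflip : (innerₗ (En n)).flip = innerₗ (En n) :=
    LinearMap.ext fun x => LinearMap.ext fun y => real_inner_comm x y
  have key := VectorFourier.integral_bilin_fourierIntegral_eq_flip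
    (f := h) (g := 𝓕 (⇑g)) (L := innerₗ (En n))
    (μ := volume) (ν := volume) (e := Real.fourierChar)
    (ContinuousLinearMap.mul ℂ A) Real.continuous_fourierChar
    (by exact continuous_inner) hh hgF
  rw [hflip] at key
  have hinv : 𝓕⁻ (𝓕 (⇑g)) = ⇑g :=
    g.continuous.fourierInv_fourier_eq g.integrable hgF
  calc ∫ ξ, star (𝓕 (⇑f) ξ) * 𝓕 (⇑g) ξ
      = ∫ ξ, 𝓕 h ξ * 𝓕 (⇑g) ξ := by
        simp_rw [star_fourier]
        rfl
    _ = ∫ x, h x * 𝓕 (𝓕 (⇑g)) x := key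
    _ = ∫ x, star (f (-x)) * g (-x) := by
        have h2 : ∀ y : En n,
            𝓕 (𝓕 (⇑g)) y = g (-y) := by
          intro y
          have := Real.fourierInv_eq_fourier_neg
            (𝓕 (⇑g)) (-y)
          rw [neg_neg] at this
          rw [← this, hinv]
        simp_rw [h2]
        rfl
    _ = ∫ x, star (f x) * g x :=
        integral_neg_eq_self (fun x => star (f x) * g x) volume


end AuxParseval

open scoped FourierTransform RealInnerProductSpace in
/-- **A-valued Parseval identity.** The Fourier transform is "unitary" with
respect to the `A`-valued inner product: for all `f, g ∈ S_A`,
`∫ f̂(ξ)* ĝ(ξ) dξ = ∫ f(x)* g(x) dx`. -/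
theorem fourierA_parseval (f g : SchwartzMap (En n) A) :
    (∫ ξ : En n, star (fourierA A ⇑f ξ) * fourierA A ⇑g ξ) =
      ∫ x : En n, star (f x) * g x := by
  have hπ : (0:ℝ) < 2 * Real.pi := by positivity
  set c : ℝ := (2 * Real.pi) ^ (-(n : ℝ) / 2) with hc
  have hcv := MeasureTheory.Measure.integral_comp_smul volume
    (fun η : En n => star (𝓕 (⇑f) η) * 𝓕 (⇑g) η)
    ((2 * Real.pi)⁻¹)
  calc (∫ ξ : En n, star (fourierA A ⇑f ξ) * fourierA A ⇑g ξ)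
      = ∫ ξ : En n, c • c •
          (star (𝓕 (⇑f) ((2 * Real.pi)⁻¹ • ξ)) *
            𝓕 (⇑g) ((2 * Real.pi)⁻¹ • ξ)) := by
        simp_rw [fourierA_eq_aux, star_smul, star_trivial, smul_mul_assoc, mul_smul_comm]
        rfl
    _ = c • c • ∫ ξ : En n,
          (fun η : En n => star (𝓕 (⇑f) η) *
            𝓕 (⇑g) η) ((2 * Real.pi)⁻¹ • ξ) := by
        rw [integral_smul, integral_smul]
    _ = c • c • |(((2 * Real.pi)⁻¹) ^ (Module.finrank ℝ (En n)))⁻¹| •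
          ∫ η : En n, star (𝓕 (⇑f) η) * 𝓕 (⇑g) η := by
        rw [hcv]
    _ = ∫ η : En n, star (𝓕 (⇑f) η) * 𝓕 (⇑g) η := by
        rw [smul_smul, smul_smul]
        have h1 : c * c * |(((2 * Real.pi)⁻¹) ^ (Module.finrank ℝ (En n)))⁻¹| = 1 := by
          rw [finrank_euclideanSpace_fin, inv_pow, inv_inv, abs_of_pos (by positivity), hc,
            ← Real.rpow_add hπ, ← Real.rpow_natCast (2 * Real.pi) n, ← Real.rpow_add hπ]
          norm_num
        rw [h1, one_smul]
    _ = ∫ x, star (f x) * g x := parseval2pi A f g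


end
end

section
/- Fix χ ∈ C_c^∞(ℝ^{2n}, ℂ) with χ ≡ 1 on a neighborhood of 0, and for a ∈ CB^∞(ℝ^{2n}, A) and 0 < ε ≤ 1 set a_ε(x,ξ) = χ(εx, εξ)·a(x,ξ). Then for all φ, ψ ∈ S_A, ⟨ψ, a_ε(x,D)φ⟩ converges in the norm of A to ⟨ψ, a(x,D)φ⟩ as ε → 0. -/
open MeasureTheory Complex Filter Metric
open scoped ContDiff

noncomputable section

variable {n : ℕ} (A : Type*) [NormedRing A] [StarRing A] [CStarRing A]
  [CompleteSpace A] [NormedAlgebra ℂ A] [StarModule ℂ A]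

/-- `fourierA` in terms of the Schwartz-space Fourier transform. -/
lemma fourierA_eq_fourierTransform (φ : SchwartzMap (En n) A) :
    fourierA A ⇑φ = fun ξ => (2 * Real.pi) ^ (-(n : ℝ) / 2) •
      (SchwartzMap.fourierTransformCLM ℂ φ) ((2 * Real.pi)⁻¹ • ξ) := by
  funext ξ
  rw [fourierA, SchwartzMap.fourierTransformCLM_apply, SchwartzMap.fourier_coe, Real.fourier_eq']
  congr 1
  congr 1
  funext y
  congr 1
  rw [real_inner_smul_right]
  have h2 : (2 * Real.pi) ≠ 0 := by positivity
  rw [show -2 * Real.pi * ((2 * Real.pi)⁻¹ * (inner ℝ y ξ : ℝ)) = -(inner ℝ y ξ : ℝ) by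
    field_simp]
  push_cast
  ring

lemma norm_exp_I_mul_real (t : ℝ) : ‖Complex.exp (Complex.I * (t : ℂ))‖ = 1 := by
  simp [Complex.norm_exp, Complex.mul_re]

set_option maxHeartbeats 1000000 in
/-- Fix `χ ∈ C_c^∞(ℝ^{2n}, ℂ)` with `χ ≡ 1` on a neighborhood of `0`, and for
`a ∈ CB^∞(ℝ^{2n}, A)` and `0 < ε ≤ 1` set `a_ε(x,ξ) = χ(εx, εξ)·a(x,ξ)`. Then for
all `φ, ψ ∈ S_A`, `⟨ψ, a_ε(x,D)φ⟩` converges in the norm of `A` to `⟨ψ, a(x,D)φ⟩`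
as `ε → 0`. -/
theorem cutoff_inner_tendsto (χ : En n × En n → ℂ)
    (hχ : ContDiff ℝ ∞ χ) (hχc : HasCompactSupport χ)
    (hχ1 : ∀ᶠ p in nhds (0 : En n × En n), χ p = 1)
    (a : En n × En n → A) (ha : CBInfty a) (φ ψ : SchwartzMap (En n) A) :
    Tendsto
      (fun ε : ℝ =>
        ∫ x : En n, star (ψ x) * psdo A (fun p : En n × En n => χ (ε • p) • a p) ⇑φ x)
      (nhdsWithin (0 : ℝ) (Set.Ioc (0 : ℝ) 1))
      (nhds (∫ x : En n, star (ψ x) * psdo A a ⇑φ x)) := by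
  set l := nhdsWithin (0 : ℝ) (Set.Ioc (0 : ℝ) 1) with hl
  obtain ⟨Ca, hCa⟩ := ha.2 0
  simp only [norm_iteratedFDeriv_zero] at hCa
  have hCa0 : 0 ≤ Ca := le_trans (norm_nonneg _) (hCa 0)
  obtain ⟨Cχ, hCχ⟩ := hχ.continuous.bounded_above_of_compact_support hχc
  have hCχ0 : 0 ≤ Cχ := le_trans (norm_nonneg _) (hCχ 0)
  have hc2 : (0 : ℝ) < (2 * Real.pi) ^ (-(n : ℝ) / 2) :=
    Real.rpow_pos_of_pos (by positivity) _
  -- properties of the Fourier transform of φ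
  set F : En n → A := fourierA A ⇑φ with hF
  have h2pi : ((2 * Real.pi)⁻¹ : ℝ) ≠ 0 := by positivity
  have hFcont : Continuous F := by
    rw [hF, fourierA_eq_fourierTransform]
    exact ((SchwartzMap.fourierTransformCLM ℂ φ).continuous.comp
      (continuous_const_smul _)).const_smul _
  have hFint : Integrable F := by
    rw [hF, fourierA_eq_fourierTransform]
    exact (((SchwartzMap.fourierTransformCLM ℂ φ).integrable).comp_smul h2pi).smul _
  -- the uniform bound for the inner integrand
  have hbd : ∀ (ε : ℝ) (x ξ : En n),
      ‖Complex.exp (Complex.I * ((inner ℝ x ξ : ℝ) : ℂ)) •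
          ((χ (ε • ((x, ξ) : En n × En n)) • a (x, ξ)) * F ξ)‖
        ≤ Cχ * Ca * ‖F ξ‖ := by
    intro ε x ξ
    rw [norm_smul, norm_exp_I_mul_real, one_mul]
    calc ‖(χ (ε • ((x, ξ) : En n × En n)) • a (x, ξ)) * F ξ‖
        ≤ ‖χ (ε • ((x, ξ) : En n × En n)) • a (x, ξ)‖ * ‖F ξ‖ := norm_mul_le _ _
      _ = ‖χ (ε • ((x, ξ) : En n × En n))‖ * ‖a (x, ξ)‖ * ‖F ξ‖ := by rw [norm_smul]
      _ ≤ Cχ * Ca * ‖F ξ‖ :=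
          mul_le_mul_of_nonneg_right
            (mul_le_mul (hCχ _) (hCa _) (norm_nonneg _) hCχ0) (norm_nonneg _)
  have hbdint : Integrable fun ξ => Cχ * Ca * ‖F ξ‖ := hFint.norm.const_mul _
  -- joint continuity of the inner integrand
  have gcont : ∀ ε : ℝ, Continuous fun p : En n × En n =>
      Complex.exp (Complex.I * ((inner ℝ p.1 p.2 : ℝ) : ℂ)) •
        ((χ (ε • p) • a p) * F p.2) := by
    intro ε
    exact (Complex.continuous_exp.comp (continuous_const.mul
        (Complex.continuous_ofReal.comp continuous_inner))).smul
      (((hχ.continuous.comp (continuous_const_smul ε)).smul ha.1.continuous).mul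
        (hFcont.comp continuous_snd))
  -- pointwise convergence of psdo aε φ
  have hpsdo_tendsto : ∀ x : En n,
      Tendsto (fun ε : ℝ => psdo A (fun p : En n × En n => χ (ε • p) • a p) ⇑φ x) l
        (nhds (psdo A a ⇑φ x)) := by
    intro x
    simp only [psdo, ← hF]
    apply Tendsto.const_smul
    apply tendsto_integral_filter_of_dominated_convergence (fun ξ => Cχ * Ca * ‖F ξ‖)
    · filter_upwards with ε
      exact ((gcont ε).comp (continuous_const.prodMk continuous_id)).aestronglyMeasurable
    · filter_upwards with ε
      filter_upwards with ξ
      exact hbd ε x ξ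
    · exact hbdint
    · filter_upwards with ξ
      have h0 : Tendsto (fun ε : ℝ => ε • ((x, ξ) : En n × En n)) l
          (nhds (0 : En n × En n)) := by
        have h1 : Tendsto (fun ε : ℝ => ε • ((x, ξ) : En n × En n)) (nhds 0)
            (nhds ((0 : ℝ) • ((x, ξ) : En n × En n))) :=
          ((continuous_id.smul continuous_const).tendsto 0)
        rw [zero_smul] at h1
        exact h1.mono_left nhdsWithin_le_nhds
      refine Tendsto.congr' ?_ tendsto_const_nhds
      filter_upwards [h0.eventually hχ1] with ε hε
      rw [hε, one_smul]
  -- uniform bound of psdo aε φ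
  have hpsdo_bd : ∀ (ε : ℝ) (x : En n),
      ‖psdo A (fun p : En n × En n => χ (ε • p) • a p) ⇑φ x‖
        ≤ (2 * Real.pi) ^ (-(n : ℝ) / 2) * (Cχ * Ca * ∫ ξ : En n, ‖F ξ‖) := by
    intro ε x
    simp only [psdo, ← hF]
    rw [norm_smul, Real.norm_eq_abs, abs_of_pos hc2]
    gcongr
    calc ‖∫ ξ : En n, Complex.exp (Complex.I * ((inner ℝ x ξ : ℝ) : ℂ)) •
            ((χ (ε • ((x, ξ) : En n × En n)) • a (x, ξ)) * F ξ)‖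
        ≤ ∫ ξ : En n, Cχ * Ca * ‖F ξ‖ :=
          norm_integral_le_of_norm_le hbdint (Eventually.of_forall fun ξ => hbd ε x ξ)
      _ = Cχ * Ca * ∫ ξ : En n, ‖F ξ‖ := integral_const_mul _ _
  -- continuity of psdo aε φ in x
  have hpsdo_cont : ∀ ε : ℝ,
      Continuous fun x => psdo A (fun p : En n × En n => χ (ε • p) • a p) ⇑φ x := by
    intro ε
    simp only [psdo, ← hF]
    apply Continuous.const_smul
    apply continuous_of_dominated
      (F := fun (x : En n) (ξ : En n) =>
        Complex.exp (Complex.I * ((inner ℝ x ξ : ℝ) : ℂ)) •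
          ((χ (ε • ((x, ξ) : En n × En n)) • a (x, ξ)) * F ξ))
      (bound := fun ξ => Cχ * Ca * ‖F ξ‖)
    · intro x
      exact ((gcont ε).comp (continuous_const.prodMk continuous_id)).aestronglyMeasurable
    · intro x
      filter_upwards with ξ
      exact hbd ε x ξ
    · exact hbdint
    · filter_upwards with ξ
      exact (Complex.continuous_exp.comp (continuous_const.mul
          (Complex.continuous_ofReal.comp (continuous_id.inner continuous_const)))).smul
        (((hχ.continuous.comp ((continuous_id.prodMk continuous_const).const_smul ε)).smul
            (ha.1.continuous.comp (continuous_id.prodMk continuous_const))).mul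
          continuous_const)
  -- outer dominated convergence
  apply tendsto_integral_filter_of_dominated_convergence
    (fun x => ‖ψ x‖ * ((2 * Real.pi) ^ (-(n : ℝ) / 2) * (Cχ * Ca * ∫ ξ : En n, ‖F ξ‖)))
  · filter_upwards with ε
    exact ((continuous_star.comp ψ.continuous).mul (hpsdo_cont ε)).aestronglyMeasurable
  · filter_upwards with ε
    filter_upwards with x
    calc ‖star (ψ x) * psdo A (fun p : En n × En n => χ (ε • p) • a p) ⇑φ x‖
        ≤ ‖star (ψ x)‖ * ‖psdo A (fun p : En n × En n => χ (ε • p) • a p) ⇑φ x‖ :=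
          norm_mul_le _ _
      _ ≤ ‖ψ x‖ * ((2 * Real.pi) ^ (-(n : ℝ) / 2) * (Cχ * Ca * ∫ ξ : En n, ‖F ξ‖)) := by
          rw [norm_star]
          gcongr
          exact hpsdo_bd ε x
  · exact ψ.integrable.norm.mul_const _
  · filter_upwards with x
    exact (hpsdo_tendsto x).const_mul (star (ψ x))

end
end

section
/- The symbol map is injective: if a ∈ CB^∞(ℝ^{2n}, A) satisfies a(x,D)φ(x) = 0 for all φ ∈ S_A and all x ∈ ℝⁿ, then a = 0. -/
open MeasureTheory Complex Filter Metric
open scoped ContDiff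
open scoped SchwartzMap FourierTransform Convolution Topology

noncomputable section

variable {n : ℕ} (A : Type*) [NormedRing A] [StarRing A] [CStarRing A]
  [CompleteSpace A] [NormedAlgebra ℂ A] [StarModule ℂ A]

/-! ### Auxiliary material for the proof -/

/-- A smooth compactly supported function is a Schwartz function. -/
def toSchwartzCS {E F : Type*} [NormedAddCommGroup E] [NormedSpace ℝ E]
    [NormedAddCommGroup F] [NormedSpace ℝ F] {f : E → F}
    (hf : ContDiff ℝ ∞ f) (hsupp : HasCompactSupport f) : SchwartzMap E F where
  toFun := f
  smooth' := hf
  decay' := by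
    intro k m
    have hc : Continuous fun x => ‖x‖ ^ k * ‖iteratedFDeriv ℝ m f x‖ :=
      (continuous_norm.pow k).mul (hf.continuous_iteratedFDeriv (by exact_mod_cast le_top)).norm
    have hs : HasCompactSupport fun x => ‖x‖ ^ k * ‖iteratedFDeriv ℝ m f x‖ :=
      HasCompactSupport.mul_left ((hsupp.iteratedFDeriv m).norm)
    obtain ⟨C, hC⟩ := hs.exists_bound_of_continuous hc
    exact ⟨C, fun x => le_trans (le_abs_self _) ((Real.norm_eq_abs _) ▸ hC x)⟩

@[simp] lemma toSchwartzCS_apply {E F : Type*} [NormedAddCommGroup E] [NormedSpace ℝ E]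
    [NormedAddCommGroup F] [NormedSpace ℝ F] {f : E → F}
    (hf : ContDiff ℝ ∞ f) (hsupp : HasCompactSupport f) (x : E) :
    toSchwartzCS hf hsupp x = f x := rfl

open ContinuousLinearMap in
/-- If a continuous function integrates to zero against all smooth compactly
supported test functions, then it vanishes. -/
lemma eq_zero_of_integral_smul_eq_zero {n : ℕ} {B : Type*} [NormedAddCommGroup B]
    [NormedSpace ℝ B] [CompleteSpace B] {g : En n → B} (hg : Continuous g)
    (h : ∀ (c : En n → ℝ), ContDiff ℝ ∞ c → HasCompactSupport c →
      ∫ ξ, c ξ • g ξ = 0) (ξ₀ : En n) : g ξ₀ = 0 := by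
  set φb : ℕ → ContDiffBump (0 : En n) := fun i =>
    ⟨((i : ℝ) + 2)⁻¹, ((i : ℝ) + 1)⁻¹, by positivity, by
      apply inv_strictAnti₀ <;> [positivity; linarith]⟩ with hφb
  have hφ : Tendsto (fun i => (φb i).rOut) atTop (𝓝 0) := by
    simpa [hφb, one_div] using tendsto_one_div_add_atTop_nhds_zero_nat (𝕜 := ℝ)
  have hconv := ContDiffBump.convolution_tendsto_right_of_continuous (μ := volume) hφ hg ξ₀
  have hz : ∀ i, ((φb i).normed volume ⋆[lsmul ℝ ℝ, volume] g) ξ₀ = 0 := by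
    intro i
    have hcd : ContDiff ℝ ∞ fun t => (φb i).normed volume (ξ₀ - t) :=
      ((φb i).contDiff_normed (n := ⊤)).comp (contDiff_const.sub contDiff_id)
    have hcs : HasCompactSupport fun t => (φb i).normed volume (ξ₀ - t) :=
      ((φb i).hasCompactSupport_normed).comp_homeomorph (Homeomorph.subLeft ξ₀)
    have h0 := h _ hcd hcs
    calc ((φb i).normed volume ⋆[lsmul ℝ ℝ, volume] g) ξ₀
        = ∫ t, (φb i).normed volume t • g (ξ₀ - t) := by
          simp [convolution, ContinuousLinearMap.lsmul_apply]
      _ = ∫ s, (φb i).normed volume (ξ₀ - s) • g s := by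
          rw [← integral_sub_left_eq_self
            (fun s => (φb i).normed volume (ξ₀ - s) • g s) volume ξ₀]
          simp only [sub_sub_cancel]
      _ = 0 := h0
  have hl : Tendsto (fun _ : ℕ => (0 : B)) atTop (𝓝 (g ξ₀)) := by
    simpa only [hz] using hconv
  exact tendsto_nhds_unique hl tendsto_const_nhds

/-- Every Schwartz function (times the unit of `A`) is in the image of the
`fourierA` transform. -/
lemma exists_phi (u : SchwartzMap (En n) ℂ) :
    ∃ φ : SchwartzMap (En n) A, ∀ ξ, fourierA A ⇑φ ξ = u ξ • 1 := by
  have hπ : (0:ℝ) < 2 * Real.pi := by positivity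
  set w : SchwartzMap (En n) ℂ :=
    (FourierTransform.fourierCLE ℂ 𝓢(En n, ℂ)).symm (((2 * Real.pi) ^ (-(n:ℝ)/2) : ℝ) • u) with hw
  have hFw : ∀ ξ, 𝓕 (⇑w : En n → ℂ) ξ = (2 * Real.pi) ^ (-(n:ℝ)/2) • u ξ := by
    intro ξ
    have h1 : FourierTransform.fourierCLE ℂ 𝓢(En n, ℂ) w
        = ((2 * Real.pi) ^ (-(n:ℝ)/2) : ℝ) • u := by
      rw [hw, ContinuousLinearEquiv.apply_symm_apply]
    have h2 := congrArg (fun f : SchwartzMap (En n) ℂ => f ξ) h1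
    simpa [FourierTransform.fourierCLE_apply, SchwartzMap.fourier_coe] using h2
  let eqv : En n ≃L[ℝ] En n :=
    (LinearEquiv.smulOfNeZero ℝ (En n) ((2*Real.pi)⁻¹)
      (by positivity)).toContinuousLinearEquiv
  set v : SchwartzMap (En n) ℂ := SchwartzMap.compCLMOfContinuousLinearEquiv ℝ eqv w with hv
  have hveq : ∀ y, v y = w ((2*Real.pi)⁻¹ • y) := fun y => rfl
  set φ : SchwartzMap (En n) A := SchwartzMap.bilinLeftCLM
    (ContinuousLinearMap.lsmul ℝ ℂ : ℂ →L[ℝ] A →L[ℝ] A)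
    (Function.HasTemperateGrowth.const (1 : A)) v with hφ
  have hφeq : ∀ y, φ y = v y • (1 : A) := fun y => rfl
  refine ⟨φ, fun ξ => ?_⟩
  set F : En n → ℂ := fun y => Complex.exp (-(Complex.I * ((inner ℝ y ξ : ℝ) : ℂ))) * v y with hF
  have h1 : fourierA A ⇑φ ξ = (2 * Real.pi) ^ (-(n:ℝ)/2) • ((∫ y : En n, F y) • (1:A)) := by
    rw [fourierA]
    congr 1
    rw [← integral_smul_const]
    congr 1
    funext y
    rw [hφeq y, smul_smul]
  have hFcomp : ∀ z : En n, F ((2*Real.pi) • z)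
      = Complex.exp (((-2 * Real.pi * (inner ℝ z ξ : ℝ) : ℝ) : ℂ) * Complex.I) • w z := by
    intro z
    have hinner : (inner ℝ ((2*Real.pi) • z) ξ : ℝ) = 2*Real.pi * (inner ℝ z ξ : ℝ) :=
      real_inner_smul_left _ _ _
    have hz : ((2*Real.pi)⁻¹ • ((2*Real.pi) • z) : En n) = z := by
      rw [smul_smul, inv_mul_cancel₀ (ne_of_gt hπ), one_smul]
    rw [hF]
    simp only []
    rw [hveq, hz, hinner, smul_eq_mul]
    congr 1
    push_cast
    ring_nf
  have h3 : ∫ z : En n, F ((2*Real.pi) • z) = 𝓕 (⇑w : En n → ℂ) ξ := by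
    rw [Real.fourier_eq']
    simp_rw [hFcomp]
  have hcomp := MeasureTheory.Measure.integral_comp_smul (volume : Measure (En n)) F (2*Real.pi)
  rw [h3, finrank_euclideanSpace, Fintype.card_fin] at hcomp
  have habs : |((2*Real.pi) ^ n)⁻¹| = ((2*Real.pi) ^ n)⁻¹ :=
    abs_of_pos (by positivity)
  rw [habs] at hcomp
  have hS : (∫ y : En n, F y) = ((2*Real.pi) ^ n : ℝ) • 𝓕 (⇑w : En n → ℂ) ξ := by
    rw [hcomp, smul_smul, mul_inv_cancel₀ (by positivity), one_smul]
  rw [h1, hS, hFw, ← smul_assoc, ← smul_assoc]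
  rw [smul_eq_mul, ← smul_assoc, smul_eq_mul, ← Real.rpow_natCast (2*Real.pi) n,
    ← Real.rpow_add hπ, mul_comm, ← Real.rpow_add hπ,
    show (-(n:ℝ)/2 + (-(n:ℝ)/2 + (n:ℝ))) = 0 by ring, Real.rpow_zero, one_smul]

/-- Key step: the hypothesis implies that `a (x, ·)` integrates to zero against
every smooth compactly supported complex test function. -/
lemma integral_test_eq_zero (a : En n × En n → A)
    (h : ∀ (φ : SchwartzMap (En n) A) (x : En n), psdo A a ⇑φ x = 0)
    (x : En n) (c : En n → ℂ) (hc : ContDiff ℝ ∞ c) (hcs : HasCompactSupport c) :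
    ∫ ξ : En n, c ξ • a (x, ξ) = 0 := by
  have hinner : ContDiff ℝ ∞ fun ξ : En n => ((inner ℝ x ξ : ℝ) : ℂ) :=
    Complex.ofRealCLM.contDiff.comp (innerSL ℝ x).contDiff
  have he : ContDiff ℝ ∞ fun ξ : En n => Complex.exp (-(Complex.I * ((inner ℝ x ξ : ℝ) : ℂ))) :=
    Complex.contDiff_exp.comp ((contDiff_const.mul hinner).neg)
  set u : En n → ℂ := fun ξ => Complex.exp (-(Complex.I * ((inner ℝ x ξ : ℝ) : ℂ))) * c ξ with hu
  have hucd : ContDiff ℝ ∞ u := he.mul hc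
  have hucs : HasCompactSupport u := hcs.mul_left
  obtain ⟨φ, hφ⟩ := exists_phi A (toSchwartzCS hucd hucs)
  have hps : (2*Real.pi) ^ (-(n:ℝ)/2) •
      ∫ ξ : En n, Complex.exp (Complex.I * ((inner ℝ x ξ : ℝ) : ℂ))
        • (a (x, ξ) * fourierA A ⇑φ ξ) = 0 := h φ x
  have hint : ∀ ξ : En n,
      Complex.exp (Complex.I * ((inner ℝ x ξ : ℝ) : ℂ)) • (a (x, ξ) * fourierA A ⇑φ ξ)
        = c ξ • a (x, ξ) := by
    intro ξ
    rw [hφ ξ, toSchwartzCS_apply, mul_smul_comm, mul_one, smul_smul]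
    congr 1
    rw [hu]
    simp only []
    rw [← mul_assoc, ← Complex.exp_add, add_neg_cancel, Complex.exp_zero, one_mul]
  simp_rw [hint] at hps
  have hr : ((2*Real.pi) ^ (-(n:ℝ)/2) : ℝ) ≠ 0 :=
    ne_of_gt (Real.rpow_pos_of_pos (by positivity) _)
  calc ∫ ξ : En n, c ξ • a (x, ξ)
      = ((2*Real.pi) ^ (-(n:ℝ)/2))⁻¹ •
        (((2*Real.pi) ^ (-(n:ℝ)/2) : ℝ) • ∫ ξ : En n, c ξ • a (x, ξ)) := by
        rw [smul_smul, inv_mul_cancel₀ hr, one_smul]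
    _ = 0 := by rw [hps, smul_zero]

/-- The symbol map is injective: if `a ∈ CB^∞(ℝ^{2n}, A)` satisfies
`a(x,D)φ(x) = 0` for all `φ ∈ S_A` and all `x ∈ ℝⁿ`, then `a = 0`. -/
theorem symbol_map_injective (a : En n × En n → A) (ha : CBInfty a)
    (h : ∀ (φ : SchwartzMap (En n) A) (x : En n), psdo A a ⇑φ x = 0) :
    a = 0 := by
  funext p
  obtain ⟨x, ξ⟩ := p
  simp only [Pi.zero_apply]
  have hg : Continuous fun ξ : En n => a (x, ξ) :=
    ha.1.continuous.comp (continuous_const.prodMk continuous_id)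
  have key : ∀ (c : En n → ℝ), ContDiff ℝ ∞ c → HasCompactSupport c →
      ∫ ξ : En n, c ξ • a (x, ξ) = 0 := by
    intro c hc hcs
    have h2 := integral_test_eq_zero A a h x (fun ξ => ((c ξ : ℝ) : ℂ))
      (Complex.ofRealCLM.contDiff.comp hc) (hcs.comp_left Complex.ofReal_zero)
    simp only [Complex.coe_smul] at h2
    exact h2
  exact eq_zero_of_integral_smul_eq_zero hg key ξ

end
end

section
/- For every F ∈ CB^∞(ℝⁿ, A), all z, ζ ∈ ℝⁿ, every φ ∈ S_A and every x ∈ ℝⁿ, the conjugation of the operator L_F φ = F ×_J φ by the Heisenberg operators depends only on z − Jζ: (E_{z,ζ}^{-1}( F ×_J (E_{z,ζ}φ) ))(x) = (E_{z−Jζ,0}^{-1}( F ×_J (E_{z−Jζ,0}φ) ))(x). -/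
open MeasureTheory Complex Filter Metric
open scoped ContDiff

noncomputable section

variable {n : ℕ} (A : Type*) [NormedRing A] [StarRing A] [CStarRing A]
  [CompleteSpace A] [NormedAlgebra ℂ A] [StarModule ℂ A]

/-- The matrix `J` acting on the Euclidean space `ℝⁿ`. -/
def matVec (J : Matrix (Fin n) (Fin n) ℝ) (u : En n) : En n :=
  (EuclideanSpace.equiv (Fin n) ℝ).symm (J.mulVec (EuclideanSpace.equiv (Fin n) ℝ u))

/-- The deformed (Rieffel) product
`F ×_J φ(x) = (2π)^{-n} ∫ F(x + Ju) (∫ e^{i u·v} φ(x + v) dv) du`. -/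
def rieffel (J : Matrix (Fin n) (Fin n) ℝ) (F φ : En n → A) (x : En n) : A :=
  (2 * Real.pi) ^ (-(n : ℝ)) •
    ∫ u : En n, F (x + matVec J u) *
      ∫ v : En n, Complex.exp (Complex.I * ((inner ℝ u v : ℝ) : ℂ)) • φ (x + v)

/-- The Heisenberg operator `E_{z,ζ} f(x) = e^{i ζ·x} f(x − z)`. -/
def heis (z ζ : En n) (f : En n → A) : En n → A := fun x =>
  Complex.exp (Complex.I * ((inner ℝ ζ x : ℝ) : ℂ)) • f (x - z)

/-- The inverse Heisenberg operator `E_{z,ζ}^{-1} f(x) = e^{-i ζ·(x+z)} f(x + z)`. -/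
def heisInv (z ζ : En n) (f : En n → A) : En n → A := fun x =>
  Complex.exp (-(Complex.I * ((inner ℝ ζ (x + z) : ℝ) : ℂ))) • f (x + z)

/-- For every `F ∈ CB^∞(ℝⁿ, A)`, all `z, ζ ∈ ℝⁿ`, every `φ ∈ S_A` and every
`x ∈ ℝⁿ`, the conjugation of `L_F φ = F ×_J φ` by the Heisenberg operators
depends only on `z − Jζ`:
`(E_{z,ζ}^{-1}(F ×_J (E_{z,ζ}φ)))(x) = (E_{z−Jζ,0}^{-1}(F ×_J (E_{z−Jζ,0}φ)))(x)`. -/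
theorem heis_conj_rieffel (J : Matrix (Fin n) (Fin n) ℝ) (hJ : J.transpose = -J)
    (F : En n → A) (hF : CBInfty F) (z ζ : En n)
    (φ : SchwartzMap (En n) A) (x : En n) :
    heisInv A z ζ (rieffel A J F (heis A z ζ ⇑φ)) x =
      heisInv A (z - matVec J ζ) 0
        (rieffel A J F (heis A (z - matVec J ζ) 0 ⇑φ)) x := by
  have hmat : ∀ u : En n, matVec J (u + ζ) = matVec J u + matVec J ζ := by
    intro u
    simp [matVec, Matrix.mulVec_add, map_add]
  set K : En n → A := fun w => ∫ v : En n,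
    Complex.exp (Complex.I * ((inner ℝ w v : ℝ) : ℂ)) • φ (x + v) with hK
  have hinner : ∀ u : En n, (∫ v : En n, Complex.exp (Complex.I * ((inner ℝ u v : ℝ) : ℂ)) •
      (Complex.exp (Complex.I * ((inner ℝ ζ (x + z + v) : ℝ) : ℂ)) • φ (x + z + v - z)))
      = Complex.exp (Complex.I * ((inner ℝ ζ (x + z) : ℝ) : ℂ)) • K (u + ζ) := by
    intro u
    rw [hK, ← integral_smul]
    congr 1
    funext v
    have harg : x + z + v - z = x + v := by abel
    have h1 : (inner ℝ ζ (x + z + v) : ℝ) = inner ℝ ζ (x + z) + inner ℝ ζ v :=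
      inner_add_right ζ (x + z) v
    have h2 : (inner ℝ (u + ζ) v : ℝ) = inner ℝ u v + inner ℝ ζ v :=
      inner_add_left u ζ v
    rw [harg, smul_smul, smul_smul, ← Complex.exp_add, ← Complex.exp_add, h1, h2]
    congr 2
    push_cast
    ring
  have htrans : (∫ u : En n, F (x + z + matVec J u) * K (u + ζ))
      = ∫ u : En n, F (x + (z - matVec J ζ) + matVec J u) * K u := by
    rw [← integral_add_right_eq_self
      (fun u => F (x + (z - matVec J ζ) + matVec J u) * K u) ζ]
    congr 1
    funext u
    have : x + (z - matVec J ζ) + matVec J (u + ζ) = x + z + matVec J u := by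
      rw [hmat]; abel
    simp only [this]
  simp only [heisInv, heis, rieffel, hinner]
  simp only [mul_smul_comm, integral_smul, htrans]
  rw [smul_comm ((2 * Real.pi : ℝ) ^ (-(n : ℝ)))
    (Complex.exp (Complex.I * ((inner ℝ ζ (x + z) : ℝ) : ℂ))), smul_smul,
    ← Complex.exp_add, neg_add_cancel, Complex.exp_zero, one_smul]
  have h0 : ∀ w : En n, ((inner ℝ (0 : En n) w : ℝ) : ℂ) = 0 := by
    intro w; simp [inner_zero_left]
  simp only [h0, mul_zero, neg_zero, Complex.exp_zero, one_smul]
  have harg : ∀ v : En n, x + (z - matVec J ζ) + v - (z - matVec J ζ) = x + v := by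
    intro v; abel
  simp only [harg, hK]


end
end
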